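/- arXiv:2004.12171 — 6 statements merged into one kernel-verified Lean document; each statement's English description precedes it below -/
import Mathlib

section
/- If R is reflexive, then for any subset A of S: A^u = (A^△)^▲ and A^{u_i} = (A^▲)^△, where A^u = ⋃{[a] : [a] ∩ A ≠ ∅} and A^{u_i} = ⋃{[a]_i : [a]_i ∩ A ≠ ∅}. -/
def nbd {S : Type*} (R : S → S → Prop) (a : S) : Set S := {x | R x a}
def invNbd {S : Type*} (R : S → S → Prop) (x : S) : Set S := {y | R x y}

def triUp {S : Type*} (R : S → S → Prop) (A : Set S) : Set S := ⋃ x ∈ A, invNbd R x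
def bTriUp {S : Type*} (R : S → S → Prop) (A : Set S) : Set S := ⋃ x ∈ A, nbd R x

def upperApprox {S : Type*} (R : S → S → Prop) (A : Set S) : Set S :=
  {x | ∃ a, x ∈ nbd R a ∧ (nbd R a ∩ A).Nonempty}

def iUpperApprox {S : Type*} (R : S → S → Prop) (A : Set S) : Set S :=
  {x | ∃ a, x ∈ invNbd R a ∧ (invNbd R a ∩ A).Nonempty}

theorem stmt8 {S : Type*} (R : S → S → Prop) (hrefl : ∀ a, R a a) (A : Set S) :
    upperApprox R A = bTriUp R (triUp R A) ∧ iUpperApprox R A = triUp R (bTriUp R A) := by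
  constructor <;> ext x <;>
    simp only [upperApprox, iUpperApprox, bTriUp, triUp, nbd, invNbd, Set.mem_setOf_eq,
      Set.mem_iUnion, Set.Nonempty, Set.mem_inter_iff] <;>
  · constructor
    · rintro ⟨a, hxa, y, hya, hyA⟩
      exact ⟨a, ⟨y, hyA, hya⟩, hxa⟩
    · rintro ⟨a, ⟨y, hyA, hya⟩, hxa⟩
      exact ⟨a, hxa, y, hya, hyA⟩
end

section
/- Let (S, ·) be a groupoid arising from an up-directed relational system S with relation R (i.e., a·b = b when R a b, and a·b ∈ U_R(a,b) when ¬R a b, where U_R(a,b) = {x : R a x ∧ R b x}). If the groupoid is commutative (a·b = b·a for all a, b), then R is antisymmetric. -/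
theorem stmt11 {S : Type*} (R : S → S → Prop) (mul : S → S → S)
    (hdir : ∀ a b : S, ∃ c, R a c ∧ R b c)
    (h1 : ∀ a b, R a b → mul a b = b)
    (h2 : ∀ a b, ¬ R a b → R a (mul a b) ∧ R b (mul a b))
    (hcomm : ∀ a b, mul a b = mul b a) :
    ∀ a b, R a b → R b a → a = b := by
  intro a b hab hba
  have := hcomm a b
  rw [h1 a b hab, h1 b a hba] at this
  exact this.symm
end

section
/- Let (S, ·) be a groupoid arising from an up-directed relational system with relation R (a·b = b if R a b, else a·b ∈ U_R(a,b)). If (a·b)·a = a·b for all a, b, then R is antisymmetric. -/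
theorem stmt12 {S : Type*} (R : S → S → Prop) (mul : S → S → S)
    (hdir : ∀ a b : S, ∃ c, R a c ∧ R b c)
    (h1 : ∀ a b, R a b → mul a b = b)
    (h2 : ∀ a b, ¬ R a b → R a (mul a b) ∧ R b (mul a b))
    (hid : ∀ a b, mul (mul a b) a = mul a b) :
    ∀ a b, R a b → R b a → a = b := by
  intro a b hab hba
  have h := hid a b
  rw [h1 a b hab, h1 b a hba] at h
  exact h
end

section
/- Let (S, ·) be a groupoid arising from an up-directed relational system with relation R. If · is associative, then R is transitive. -/
theorem stmt13 {S : Type*} (R : S → S → Prop) (mul : S → S → S)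
    (hdir : ∀ a b : S, ∃ c, R a c ∧ R b c)
    (h1 : ∀ a b, R a b → mul a b = b)
    (h2 : ∀ a b, ¬ R a b → R a (mul a b) ∧ R b (mul a b))
    (hassoc : ∀ a b c, mul (mul a b) c = mul a (mul b c)) :
    ∀ a b c, R a b → R b c → R a c := by
  intro a b c hab hbc
  by_contra hac
  have : mul a c = c := by
    have := hassoc a b c
    rw [h1 a b hab, h1 b c hbc] at this
    exact this.symm
  exact hac (this ▸ (h2 a c hac).1)
end

section
/- R is transitive if and only if the associated groupoid satisfies a·((a·b)·c) = (a·b)·c for all a, b, c, whenever the groupoid arises from an up-directed reflexive relational system via a·b = b when R a b and a·b ∈ U_R(a,b) otherwise. (Forward direction: if R is transitive then the identity holds.) -/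
theorem stmt14 {S : Type*} (R : S → S → Prop) (mul : S → S → S)
    (hdir : ∀ a b : S, ∃ c, R a c ∧ R b c)
    (hrefl : ∀ a, R a a)
    (h1 : ∀ a b, R a b → mul a b = b)
    (h2 : ∀ a b, ¬ R a b → R a (mul a b) ∧ R b (mul a b))
    (htrans : ∀ a b c, R a b → R b c → R a c) :
    ∀ a b c, mul a (mul (mul a b) c) = mul (mul a b) c := by
  have key : ∀ x y : S, R x (mul x y) := by
    intro x y
    by_cases h : R x y
    · rw [h1 x y h]; exact h
    · exact (h2 x y h).1
  intro a b c
  exact h1 _ _ (htrans _ _ _ (key a b) (key (mul a b) c))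
end

section
/- On the set S_lu = {A^l : A ⊆ S} ∪ {A^u : A ⊆ S} with R reflexive, the operations A ⋒ B = (A ∩ B)^l and A ⋓ B = (A ∪ B)^u satisfy: A ⋒ A = A, (A ⋓ A) ⋒ A = A, A ⋓ A = A^u, commutativity of both, and half-absorption A ⋒ (B ⋓ A) = A. -/
def lowerApprox {S : Type*} (R : S → S → Prop) (A : Set S) : Set S :=
  {x | ∃ a, x ∈ nbd R a ∧ nbd R a ⊆ A}

def Slu {S : Type*} (R : S → S → Prop) : Set (Set S) :=
  {B | (∃ A : Set S, B = lowerApprox R A) ∨ (∃ A : Set S, B = upperApprox R A)}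

lemma lower_subset {S : Type*} (R : S → S → Prop) (A : Set S) :
    lowerApprox R A ⊆ A := by
  rintro x ⟨a, hx, hsub⟩; exact hsub hx

lemma subset_upper {S : Type*} (R : S → S → Prop) (hrefl : ∀ a, R a a) (A : Set S) :
    A ⊆ upperApprox R A :=
  fun x hx => ⟨x, hrefl x, x, hrefl x, hx⟩

lemma lower_fix {S : Type*} (R : S → S → Prop) {A : Set S} (hA : A ∈ Slu R) :
    lowerApprox R A = A := by
  refine Set.Subset.antisymm (lower_subset R A) ?_
  rcases hA with ⟨B, rfl⟩ | ⟨B, rfl⟩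
  · rintro x ⟨a, hx, hsub⟩
    exact ⟨a, hx, fun y hy => ⟨a, hy, hsub⟩⟩
  · rintro x ⟨a, hx, hne⟩
    exact ⟨a, hx, fun y hy => ⟨a, hy, hne⟩⟩

theorem stmt18 {S : Type*} (R : S → S → Prop) (hrefl : ∀ a, R a a) :
    (∀ A ∈ Slu R, lowerApprox R (A ∩ A) = A) ∧
    (∀ A ∈ Slu R, lowerApprox R (upperApprox R (A ∪ A) ∩ A) = A) ∧
    (∀ A ∈ Slu R, upperApprox R (A ∪ A) = upperApprox R A) ∧
    (∀ A ∈ Slu R, ∀ B ∈ Slu R, lowerApprox R (A ∩ B) = lowerApprox R (B ∩ A)) ∧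
    (∀ A ∈ Slu R, ∀ B ∈ Slu R, upperApprox R (A ∪ B) = upperApprox R (B ∪ A)) ∧
    (∀ A ∈ Slu R, ∀ B ∈ Slu R,
      lowerApprox R (A ∩ upperApprox R (B ∪ A)) = A) := by
  refine ⟨?_, ?_, ?_, ?_, ?_, ?_⟩
  · intro A hA; rw [Set.inter_self]; exact lower_fix R hA
  · intro A hA
    have h : upperApprox R (A ∪ A) ∩ A = A :=
      Set.inter_eq_right.mpr (by rw [Set.union_self]; exact subset_upper R hrefl A)
    rw [h]; exact lower_fix R hA
  · intro A _; rw [Set.union_self]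
  · intro A _ B _; rw [Set.inter_comm]
  · intro A _ B _; rw [Set.union_comm]
  · intro A hA B _
    have h : A ∩ upperApprox R (B ∪ A) = A :=
      Set.inter_eq_left.mpr
        ((Set.subset_union_right).trans (subset_upper R hrefl (B ∪ A)))
    rw [h]; exact lower_fix R hA
end
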